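/- Let σ₊, σ₋ > 0, H ∈ ℝ, N ≥ 2 a natural number, and define S : ℝ → ℝ by S(z) = ((N−1)H√σ₋/(2(√σ₊+√σ₋)))·(z+√σ₊)·e^{−z/√σ₊} for z > 0 and S(z) = ((N−1)H√σ₊/(2(√σ₊+√σ₋)))·(−z+√σ₋)·e^{z/√σ₋} for z ≤ 0. Then S is continuous at 0, the one-sided derivatives satisfy σ₊S'(0⁺) = σ₋S'(0⁻), and S(0) = ((N−1)H√σ₊√σ₋)/(2(√σ₊+√σ₋)). -/

import Mathlib

open Real Set

noncomputable def Sstar (sp sm H : ℝ) (N : ℕ) (z : ℝ) : ℝ :=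
  if 0 < z then
    ((N - 1 : ℝ) * H * Real.sqrt sm / (2 * (Real.sqrt sp + Real.sqrt sm))) *
      (z + Real.sqrt sp) * Real.exp (-z / Real.sqrt sp)
  else
    ((N - 1 : ℝ) * H * Real.sqrt sp / (2 * (Real.sqrt sp + Real.sqrt sm))) *
      (-z + Real.sqrt sm) * Real.exp (z / Real.sqrt sm)

/-!
Both branches of `Sstar` are multiples of the profile `w ↦ (w + a) e^{-w/a}` (on the left with
`w = -z`), whose derivative `-(w/a) e^{-w/a}` vanishes at `w = 0`. Hence both one-sided
derivatives at `0` are zero; as the two branches also agree at `0`, `Sstar` is in fact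
differentiable at `0` with derivative `0`.
-/

noncomputable def decayProfile (a w : ℝ) : ℝ := (w + a) * exp (-w / a)

theorem hasDerivAt_decayProfile {a : ℝ} (ha : a ≠ 0) (w : ℝ) :
    HasDerivAt (decayProfile a) (-(w / a) * exp (-w / a)) w := by
  have hlin : HasDerivAt (fun w : ℝ => w + a) 1 w := (hasDerivAt_id w).add_const a
  have hexp : HasDerivAt (fun w : ℝ => exp (-w / a)) (exp (-w / a) * (-1 / a)) w :=
    ((hasDerivAt_id w).neg.div_const a).exp
  refine (hlin.mul hexp).congr_deriv ?_
  field_simp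
  ring

theorem hasDerivAt_decayProfile_zero {a : ℝ} (ha : a ≠ 0) : HasDerivAt (decayProfile a) 0 0 := by
  simpa using hasDerivAt_decayProfile ha 0

section Sstar

variable {sp sm H : ℝ} {N : ℕ}

theorem Sstar_of_nonneg {z : ℝ} (hz : 0 ≤ z) :
    Sstar sp sm H N z = (N - 1 : ℝ) * H * √sm / (2 * (√sp + √sm)) * decayProfile (√sp) z := by
  rcases hz.lt_or_eq with hz | rfl
  · simp only [Sstar, if_pos hz, decayProfile]
    ring
  · simp only [Sstar, decayProfile, lt_irrefl, if_false, neg_zero, zero_div, exp_zero]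
    ring

theorem Sstar_of_nonpos {z : ℝ} (hz : z ≤ 0) :
    Sstar sp sm H N z = (N - 1 : ℝ) * H * √sp / (2 * (√sp + √sm)) * decayProfile (√sm) (-z) := by
  simp only [Sstar, if_neg hz.not_gt, decayProfile, neg_neg]
  ring

theorem Sstar_zero :
    Sstar sp sm H N 0 = (N - 1 : ℝ) * H * √sp * √sm / (2 * (√sp + √sm)) := by
  rw [Sstar_of_nonpos le_rfl, neg_zero, decayProfile]
  simp only [zero_add, neg_zero, zero_div, exp_zero]
  ring

theorem hasDerivWithinAt_Sstar_Ici (hsp : 0 < sp) :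
    HasDerivWithinAt (Sstar sp sm H N) 0 (Ici 0) 0 := by
  have h := ((hasDerivAt_decayProfile_zero (sqrt_pos.2 hsp).ne').const_mul
    ((N - 1 : ℝ) * H * √sm / (2 * (√sp + √sm)))).hasDerivWithinAt (s := Ici 0)
  rw [mul_zero] at h
  exact h.congr (fun z hz => Sstar_of_nonneg hz) (Sstar_of_nonneg le_rfl)

theorem hasDerivWithinAt_Sstar_Iic (hsm : 0 < sm) :
    HasDerivWithinAt (Sstar sp sm H N) 0 (Iic 0) 0 := by
  have hprofile : HasDerivAt (fun z => decayProfile (√sm) (-z)) 0 0 := by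
    simpa [Function.comp_def] using
      (hasDerivAt_decayProfile (sqrt_pos.2 hsm).ne' (-0)).comp (0 : ℝ) (hasDerivAt_neg (0 : ℝ))
  have h := (hprofile.const_mul
    ((N - 1 : ℝ) * H * √sp / (2 * (√sp + √sm)))).hasDerivWithinAt (s := Iic 0)
  rw [mul_zero] at h
  exact h.congr (fun z hz => Sstar_of_nonpos hz) (Sstar_of_nonpos le_rfl)

theorem hasDerivAt_Sstar_zero (hsp : 0 < sp) (hsm : 0 < sm) :
    HasDerivAt (Sstar sp sm H N) 0 0 := by
  have h := (hasDerivWithinAt_Sstar_Iic (H := H) (N := N) hsm).union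
    (hasDerivWithinAt_Sstar_Ici hsp)
  rwa [Iic_union_Ici, hasDerivWithinAt_univ] at h

end Sstar

theorem stmt_8_general (sp sm H : ℝ) (N : ℕ) (hsp : 0 < sp) (hsm : 0 < sm) :
    ContinuousAt (Sstar sp sm H N) 0 ∧
    (∃ dp dm : ℝ,
      HasDerivWithinAt (Sstar sp sm H N) dp (Set.Ici 0) 0 ∧
      HasDerivWithinAt (Sstar sp sm H N) dm (Set.Iic 0) 0 ∧
      sp * dp = sm * dm) ∧
    Sstar sp sm H N 0 =
      ((N - 1 : ℝ) * H * Real.sqrt sp * Real.sqrt sm) /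
        (2 * (Real.sqrt sp + Real.sqrt sm)) := by
  have h := hasDerivAt_Sstar_zero (H := H) (N := N) hsp hsm
  exact ⟨h.continuousAt, ⟨0, 0, h.hasDerivWithinAt, h.hasDerivWithinAt, by ring⟩, Sstar_zero⟩

theorem stmt_8 (sp sm H : ℝ) (N : ℕ) (hsp : 0 < sp) (hsm : 0 < sm) (hN : 2 ≤ N) :
    ContinuousAt (Sstar sp sm H N) 0 ∧
    (∃ dp dm : ℝ,
      HasDerivWithinAt (Sstar sp sm H N) dp (Set.Ici 0) 0 ∧
      HasDerivWithinAt (Sstar sp sm H N) dm (Set.Iic 0) 0 ∧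
      sp * dp = sm * dm) ∧
    Sstar sp sm H N 0 =
      ((N - 1 : ℝ) * H * Real.sqrt sp * Real.sqrt sm) /
        (2 * (Real.sqrt sp + Real.sqrt sm)) :=
  stmt_8_general sp sm H N hsp hsm
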